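/- For integers n ≥ k ≥ 2, the inequality S(n+1,k−1)·S(n+1,k+1)/S(n+1,k)² − S(n,k−1)·S(n,k)/S(n+1,k)² ≤ (n+2)(n−k+1)/((n+1)(n−k+2)) holds. -/

import Mathlib

/-!
`S` is Mathlib's `Nat.stirlingSecond`. The triangular recurrence propagates, by induction on `m`,
the Newton-type refinement of log-concavity
`(k + 1) (m - k + 1) S(m, k - 1) S(m, k + 1) ≤ k (m - k) S(m, k)²`.
Applied to row `n + 1`, and after dropping the subtracted nonnegative term, this bounds the left
side by `k (n + 1 - k) / ((k + 1) (n + 2 - k))`, which is below the claimed bound because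
`k / (k + 1) < 1 < (n + 2) / (n + 1)`.
-/

/-- Stirling numbers of the second kind. -/
def S : ℕ → ℕ → ℕ
  | 0, 0 => 1
  | 0, _ + 1 => 0
  | _ + 1, 0 => 0
  | n + 1, k + 1 => (k + 1) * S n (k + 1) + S n k

theorem S_eq_stirlingSecond : S = Nat.stirlingSecond := by
  funext n k
  induction n generalizing k with
  | zero => cases k <;> rfl
  | succ n ih =>
    cases k with
    | zero => rfl
    | succ k => rw [S, Nat.stirlingSecond_succ_succ, ih, ih]

/-- The recurrence `s(m + 1, k) = k s(m, k) + s(m, k - 1)` carries the Newton-type inequalities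
for `(A, B, C)` at `k - 1` and for `(B, C, D)` at `k` in row `m` to the one at `k` in row `m + 1`;
here `r = m + 1 - k`. -/
theorem newton_ineq_step {R : Type*} [CommRing R] [LinearOrder R] [IsStrictOrderedRing R]
    {k r A B C D : R} (hk : 1 ≤ k) (hr : 1 ≤ r) (hB : 0 < B) (hC : 0 < C) (hD : 0 ≤ D)
    (h₁ : k * (r + 1) * A * C ≤ (k - 1) * r * B ^ 2)
    (h₂ : (k + 1) * r * B * D ≤ k * (r - 1) * C ^ 2) :
    (k + 1) * (r + 1) * ((k - 1) * B + A) * ((k + 1) * D + C) ≤ k * r * (k * C + B) ^ 2 := by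
  have hk₁ : 0 ≤ k - 1 := sub_nonneg.2 hk
  have hr₁ : 0 ≤ r - 1 := sub_nonneg.2 hr
  have h₃ : (k + 1) * (r + 1) * A * D ≤ (k - 1) * (r - 1) * B * C := by
    have hprod := mul_le_mul h₁ h₂ (by positivity) (by positivity)
    refine le_of_mul_le_mul_left ?_ (by positivity : 0 < k * r * (B * C))
    linear_combination hprod
  -- what is left after bounding the `AC`, `BD` and `AD` terms by `h₁`, `h₂`, `h₃`
  have hres : 0 ≤ k ^ 2 * C ^ 2 * ((k - 1) * (k + 1) + r ^ 2) + 2 * k * r ^ 2 * B * C +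
      r ^ 2 * B ^ 2 := by
    positivity
  refine le_of_mul_le_mul_left ?_ (by positivity : 0 < k * r)
  linear_combination (k + 1) * r * h₁ + k * (k + 1) * (k - 1) * (r + 1) * h₂ +
    k * (k + 1) * r * h₃ + hres

namespace Nat

theorem stirlingSecond_pos {n k : ℕ} (hk : 0 < k) (hkn : k ≤ n) : 0 < stirlingSecond n k := by
  induction n generalizing k with
  | zero => omega
  | succ n ih =>
    rcases hkn.eq_or_lt with rfl | hlt
    · rw [stirlingSecond_self]
      exact Nat.one_pos
    · rw [stirlingSecond_succ_left n k hk.ne']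
      have := ih hk (by omega)
      positivity

theorem stirlingSecond_newton (j r : ℕ) :
    (j + 2) * (r + 1) * stirlingSecond (j + 1 + r) j * stirlingSecond (j + 1 + r) (j + 2) ≤
      (j + 1) * r * stirlingSecond (j + 1 + r) (j + 1) ^ 2 := by
  obtain ⟨m, hm⟩ : ∃ m, j + 1 + r = m := ⟨_, rfl⟩
  rw [hm]
  induction m generalizing j r with
  | zero => omega
  | succ m ih =>
    rcases j with _ | i
    · simp
    rcases r with _ | s
    · simp [stirlingSecond_eq_zero_of_lt (show m + 1 < i + 1 + 2 by omega)]
    have h₁ := ih i (s + 1) (by omega)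
    have h₂ := ih (i + 1) s (by omega)
    have hB := stirlingSecond_pos (n := m) (k := i + 1) (by omega) (by omega)
    have hC := stirlingSecond_pos (n := m) (k := i + 2) (by omega) (by omega)
    simp only [stirlingSecond_succ_succ, add_assoc, Nat.reduceAdd] at h₁ h₂ ⊢
    qify at h₁ h₂ hB hC ⊢
    have := newton_ineq_step (k := (i : ℚ) + 2) (r := (s : ℚ) + 1) (A := stirlingSecond m i)
      (D := stirlingSecond m (i + 3)) (by linarith) (by linarith) hB hC
      (by positivity) (by linear_combination h₁) (by linear_combination h₂)
    linear_combination this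

theorem stirlingSecond_mul_le_sq {m k : ℕ} (hk : 1 ≤ k) (hkm : k ≤ m) :
    (k + 1) * (m - k + 1) * stirlingSecond m (k - 1) * stirlingSecond m (k + 1) ≤
      k * (m - k) * stirlingSecond m k ^ 2 := by
  obtain ⟨j, rfl⟩ : ∃ j, k = j + 1 := ⟨k - 1, by omega⟩
  obtain ⟨r, rfl⟩ : ∃ r, m = j + 1 + r := ⟨m - (j + 1), by omega⟩
  rw [Nat.add_sub_cancel_left, Nat.add_sub_cancel]
  exact stirlingSecond_newton j r

end Nat

theorem stirling2_ratio_key_ineq (n k : ℕ) (h2 : 2 ≤ k) (hkn : k ≤ n) :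
    (S (n + 1) (k - 1) : ℚ) * (S (n + 1) (k + 1) : ℚ) / (S (n + 1) k : ℚ) ^ 2 -
        (S n (k - 1) : ℚ) * (S n k : ℚ) / (S (n + 1) k : ℚ) ^ 2 ≤
      ((n : ℚ) + 2) * ((n : ℚ) - k + 1) / (((n : ℚ) + 1) * ((n : ℚ) - k + 2)) := by
  rw [S_eq_stirlingSecond]
  have hkn' : (k : ℚ) ≤ n := by exact_mod_cast hkn
  have hpos : (0 : ℚ) < Nat.stirlingSecond (n + 1) k :=
    mod_cast Nat.stirlingSecond_pos (by omega) (by omega)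
  have hnewton := Nat.stirlingSecond_mul_le_sq (m := n + 1) (k := k) (by omega) (by omega)
  qify [show k ≤ n + 1 by omega] at hnewton
  calc _ ≤ (Nat.stirlingSecond (n + 1) (k - 1) * Nat.stirlingSecond (n + 1) (k + 1) : ℚ) /
        Nat.stirlingSecond (n + 1) k ^ 2 := sub_le_self _ (by positivity)
    _ ≤ k * (n - k + 1) / ((k + 1) * (n - k + 2)) := by
      rw [div_le_div_iff₀ (by positivity) (by nlinarith)]
      linear_combination hnewton
    _ ≤ _ := by
      rw [div_le_div_iff₀ (by nlinarith) (by nlinarith)]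
      have : (0 : ℚ) ≤ (n - k + 1) * (n - k + 2) * (n + k + 2) :=
        mul_nonneg (mul_nonneg (by linarith) (by linarith)) (by positivity)
      linear_combination this
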